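/- arXiv:1505.01779 — 5 statements merged into one kernel-verified Lean document; each statement's English description precedes it below -/
import Mathlib

section
/- Let n and k be integers with 0 ≤ k < n, and set N = ⌊((k+2)/(k+1))·n⌋ − (k+1). Suppose a bipartite multigraph G with parts A and B is the union of N matchings M₁, …, M_N, each of size n. Then G contains a rainbow matching of size n − k, i.e. there exist n − k pairwise distinct indices i₁, …, i_{n−k} and edges e₁ ∈ M_{i₁}, …, e_{n−k} ∈ M_{i_{n−k}} that form a matching. -/
/-- A set of edges of a bipartite multigraph with parts `A` and `B` is a matching
if any two distinct edges differ in both coordinates. -/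
def IsMatching {A B : Type*} (S : Finset (A × B)) : Prop :=
  ∀ e ∈ S, ∀ f ∈ S, e ≠ f → e.1 ≠ f.1 ∧ e.2 ≠ f.2

/-- Given matchings `M 0, …, M (N-1)`, a rainbow matching of size `s` consists of `s`
edges coming from pairwise distinct matchings, any two of which differ in both
coordinates. -/
def HasRainbowMatching {A B : Type*} {N : ℕ} (M : Fin N → Finset (A × B)) (s : ℕ) : Prop :=
  ∃ (c : Fin s → Fin N) (e : Fin s → A × B),
    Function.Injective c ∧ (∀ i, e i ∈ M (c i)) ∧
      ∀ i j, i ≠ j → (e i).1 ≠ (e j).1 ∧ (e i).2 ≠ (e j).2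

/-! Let `R` be a rainbow matching of maximum size `r`, and suppose `r < n - k`. For a list `W` of
distinct colours missing from `R`, let `reach W ⊆ R` consist of the edges whose left vertex can be
uncovered by alternating replacements with new edges coloured from `W`. For a further missing
colour `G`, maximality of `R` forces every edge of the matching `M G` either to meet an edge of
`reach (G :: W)` in its right vertex, or to meet an edge of `R \ reach W` in its left vertex; as
`M G` has `n` edges, `n + |reach W| ≤ r + |reach (G :: W)|`. Adding this up over the `u ≥ N - r`
missing colours gives `n u ≤ r u + r`, which contradicts `r < n - k` for the given `N`. -/

open Finset

section

variable {A B : Type*} {N : ℕ}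

theorem IsMatching.injOn_fst {S : Finset (A × B)} (h : IsMatching S) :
    Set.InjOn Prod.fst (S : Set (A × B)) :=
  fun e he f hf hef => by_contra fun hne => (h e he f hf hne).1 hef

theorem IsMatching.injOn_snd {S : Finset (A × B)} (h : IsMatching S) :
    Set.InjOn Prod.snd (S : Set (A × B)) :=
  fun e he f hf hef => by_contra fun hne => (h e he f hf hne).2 hef

/-- A rainbow matching, with each edge tagged by the colour of the matching it is taken from. -/
structure IsRainbow (M : Fin N → Finset (A × B)) (S : Finset (Fin N × A × B)) : Prop where
  mem : ∀ p ∈ S, p.2 ∈ M p.1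
  injOn_color : Set.InjOn Prod.fst (S : Set (Fin N × A × B))
  injOn_left : Set.InjOn (fun p => p.2.1) (S : Set (Fin N × A × B))
  injOn_right : Set.InjOn (fun p => p.2.2) (S : Set (Fin N × A × B))

namespace IsRainbow

variable {M : Fin N → Finset (A × B)} {S T : Finset (Fin N × A × B)}

theorem empty : IsRainbow M ∅ := by
  constructor <;> simp

theorem mono (hS : IsRainbow M S) (hTS : T ⊆ S) : IsRainbow M T where
  mem p hp := hS.mem p (hTS hp)
  injOn_color := hS.injOn_color.mono (coe_subset.2 hTS)
  injOn_left := hS.injOn_left.mono (coe_subset.2 hTS)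
  injOn_right := hS.injOn_right.mono (coe_subset.2 hTS)

theorem insert [DecidableEq A] [DecidableEq B] {c : Fin N} {e : A × B} (hS : IsRainbow M S)
    (he : e ∈ M c) (hc : ∀ p ∈ S, p.1 ≠ c) (hl : ∀ p ∈ S, p.2.1 ≠ e.1)
    (hr : ∀ p ∈ S, p.2.2 ≠ e.2) :
    IsRainbow M (insert (c, e) S) := by
  have hnot : (c, e) ∉ S := fun h => hc _ h rfl
  refine ⟨?_, ?_, ?_, ?_⟩
  · simp only [mem_insert, forall_eq_or_imp]
    exact ⟨he, hS.mem⟩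
  all_goals rw [coe_insert, Set.injOn_insert (mod_cast hnot)]
  · exact ⟨hS.injOn_color, fun ⟨p, hp, h⟩ => hc p hp h⟩
  · exact ⟨hS.injOn_left, fun ⟨p, hp, h⟩ => hl p hp h⟩
  · exact ⟨hS.injOn_right, fun ⟨p, hp, h⟩ => hr p hp h⟩

theorem exists_forall_card_le (M : Fin N → Finset (A × B)) :
    ∃ R, IsRainbow M R ∧ ∀ S, IsRainbow M S → #S ≤ #R := by
  classical
  set edges : Finset (Fin N × A × B) := univ ×ˢ univ.biUnion M
  have hE : ∀ S, IsRainbow M S → S ⊆ edges := fun S hS p hp =>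
    mem_product.2 ⟨mem_univ _, mem_biUnion.2 ⟨p.1, mem_univ _, hS.mem p hp⟩⟩
  obtain ⟨R, hR, hmax⟩ := exists_max_image (edges.powerset.filter (IsRainbow M)) card
    ⟨∅, mem_filter.2 ⟨empty_mem_powerset _, empty⟩⟩
  exact ⟨R, (mem_filter.1 hR).2, fun S hS =>
    hmax S (mem_filter.2 ⟨mem_powerset.2 (hE S hS), hS⟩)⟩

theorem hasRainbowMatching {s : ℕ} (hS : IsRainbow M S) (hs : s ≤ #S) :
    HasRainbowMatching M s := by
  let f : Fin s ↪ Fin N × A × B :=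
    (Fin.castLEEmb hs).trans (S.equivFin.symm.toEmbedding.trans (Function.Embedding.subtype _))
  have hf : ∀ i, f i ∈ S := fun i => (S.equivFin.symm _).2
  refine ⟨fun i => (f i).1, fun i => (f i).2, fun i j hij => f.injective ?_,
    fun i => hS.mem _ (hf i), fun i j hij => ⟨fun h => hij ?_, fun h => hij ?_⟩⟩
  · exact hS.injOn_color (hf i) (hf j) hij
  · exact f.injective (hS.injOn_left (hf i) (hf j) h)
  · exact f.injective (hS.injOn_right (hf i) (hf j) h)

end IsRainbow

section Swap

open scoped Classical

variable (M : Fin N → Finset (A × B)) (R : Finset (Fin N × A × B))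

/-- The edges `ρ ∈ R` whose left vertex can be uncovered by replacing edges of `R` along an
alternating path starting at `ρ` with edges of distinct colours from `W`, the colours being used
in the order in which they appear in `W`. -/
noncomputable def reach : List (Fin N) → Finset (Fin N × A × B)
  | [] => ∅
  | G :: W => reach W ∪
      R.filter fun ρ => ∃ e ∈ M G, e.2 = ρ.2.2 ∧ ∀ σ ∈ R \ reach W, σ.2.1 ≠ e.1

theorem mem_reach_cons {G : Fin N} {W : List (Fin N)} {ρ : Fin N × A × B} :
    ρ ∈ reach M R (G :: W) ↔ ρ ∈ reach M R W ∨
      ρ ∈ R ∧ ∃ e ∈ M G, e.2 = ρ.2.2 ∧ ∀ σ ∈ R \ reach M R W, σ.2.1 ≠ e.1 := by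
  simp only [reach, mem_union, mem_filter]

theorem reach_subset : ∀ W : List (Fin N), reach M R W ⊆ R
  | [] => empty_subset _
  | _ :: W => union_subset (reach_subset W) (filter_subset _ _)

/-- `Q` is obtained from `R` by replacements as in `reach M R W`. -/
structure IsSwap (W : List (Fin N)) (Q : Finset (Fin N × A × B)) : Prop where
  isRainbow : IsRainbow M Q
  card_eq : #Q = #R
  mem_or_color_mem : ∀ q ∈ Q, q ∈ R ∨ q.1 ∈ W
  exists_right_eq : ∀ q ∈ Q, ∃ ρ ∈ R, ρ.2.2 = q.2.2
  sdiff_reach_subset : R \ reach M R W ⊆ Q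

variable {M R} {G : Fin N} {W : List (Fin N)} {Q : Finset (Fin N × A × B)}

theorem IsSwap.color_ne (hQ : IsSwap M R W Q) (hGW : G ∉ W) (hGR : ∀ ρ ∈ R, ρ.1 ≠ G) :
    ∀ q ∈ Q, q.1 ≠ G := fun q hq =>
  (hQ.mem_or_color_mem q hq).elim (hGR q) fun hqW hqG => hGW (hqG ▸ hqW)

theorem IsSwap.cons (hQ : IsSwap M R W Q) : IsSwap M R (G :: W) Q where
  isRainbow := hQ.isRainbow
  card_eq := hQ.card_eq
  mem_or_color_mem q hq := (hQ.mem_or_color_mem q hq).imp_right (List.mem_cons_of_mem G)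
  exists_right_eq := hQ.exists_right_eq
  sdiff_reach_subset :=
    (sdiff_subset_sdiff subset_rfl subset_union_left).trans hQ.sdiff_reach_subset

theorem IsSwap.swap (hQ : IsSwap M R W Q) (hGW : G ∉ W) (hGR : ∀ ρ ∈ R, ρ.1 ≠ G)
    {ρ : Fin N × A × B} {e : A × B} (hρQ : ρ ∈ Q) (hρ : ρ ∈ reach M R (G :: W))
    (he : e ∈ M G) (her : e.2 = ρ.2.2) (hel : ∀ q ∈ Q, q.2.1 ≠ e.1) :
    IsSwap M R (G :: W) (insert (G, e) (Q.erase ρ)) where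
  isRainbow := (hQ.isRainbow.mono (erase_subset ρ Q)).insert he
    (fun q hq => hQ.color_ne hGW hGR q (mem_of_mem_erase hq))
    (fun q hq => hel q (mem_of_mem_erase hq))
    (fun q hq h => ne_of_mem_erase hq
      (hQ.isRainbow.injOn_right (mem_of_mem_erase hq) hρQ (h.trans her)))
  card_eq := by
    rw [card_insert_of_notMem fun h => hQ.color_ne hGW hGR _ (mem_of_mem_erase h) rfl,
      card_erase_of_mem hρQ, Nat.sub_add_cancel (card_pos.2 ⟨ρ, hρQ⟩), hQ.card_eq]
  mem_or_color_mem q hq := by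
    rcases mem_insert.1 hq with rfl | hq
    · exact Or.inr List.mem_cons_self
    · exact (hQ.mem_or_color_mem q (mem_of_mem_erase hq)).imp_right (List.mem_cons_of_mem G)
  exists_right_eq q hq := by
    rcases mem_insert.1 hq with rfl | hq
    · obtain ⟨σ, hσ, hσρ⟩ := hQ.exists_right_eq ρ hρQ
      exact ⟨σ, hσ, hσρ.trans her.symm⟩
    · exact hQ.exists_right_eq q (mem_of_mem_erase hq)
  sdiff_reach_subset σ hσ := by
    obtain ⟨hσR, hσW⟩ := mem_sdiff.1 hσ
    refine mem_insert_of_mem (mem_erase.2 ⟨fun h => hσW (h ▸ hρ), ?_⟩)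
    exact hQ.sdiff_reach_subset (mem_sdiff.2 ⟨hσR, fun h => hσW (subset_union_left h)⟩)

theorem exists_isSwap_forall_left_ne (hR : IsRainbow M R) :
    ∀ W : List (Fin N), W.Nodup → (∀ G ∈ W, ∀ ρ ∈ R, ρ.1 ≠ G) →
      ∀ a : A, (∀ σ ∈ R \ reach M R W, σ.2.1 ≠ a) →
        ∃ Q, IsSwap M R W Q ∧ ∀ q ∈ Q, q.2.1 ≠ a
  | [], _, _, a, ha =>
    ⟨R, ⟨hR, rfl, fun q hq => Or.inl hq, fun q hq => ⟨q, hq, rfl⟩, sdiff_subset⟩,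
      by simpa [reach] using ha⟩
  | G :: W, hW, hWR, a, ha => by
    obtain ⟨hGW, hW⟩ := List.nodup_cons.1 hW
    have hWR' : ∀ G ∈ W, ∀ ρ ∈ R, ρ.1 ≠ G := fun G' hG' =>
      hWR G' (List.mem_cons_of_mem G hG')
    by_cases hfree : ∀ σ ∈ R \ reach M R W, σ.2.1 ≠ a
    · obtain ⟨Q, hQ, hQa⟩ := exists_isSwap_forall_left_ne hR W hW hWR' a hfree
      exact ⟨Q, hQ.cons, hQa⟩
    push Not at hfree
    obtain ⟨ρ, hρ, rfl⟩ := hfree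
    have hρ' : ρ ∈ reach M R (G :: W) :=
      by_contra fun h => ha ρ (mem_sdiff.2 ⟨(mem_sdiff.1 hρ).1, h⟩) rfl
    obtain ⟨-, e, he, her, hel⟩ :=
      ((mem_reach_cons M R).1 hρ').resolve_left (mem_sdiff.1 hρ).2
    obtain ⟨Q, hQ, hQe⟩ := exists_isSwap_forall_left_ne hR W hW hWR' e.1 hel
    have hρQ := hQ.sdiff_reach_subset hρ
    refine ⟨_, hQ.swap hGW (hWR G List.mem_cons_self) hρQ hρ' he her hQe, fun q hq => ?_⟩
    rcases mem_insert.1 hq with rfl | hq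
    · exact fun h => hel ρ hρ h.symm
    · exact fun h => ne_of_mem_erase hq
        (hQ.isRainbow.injOn_left (mem_of_mem_erase hq) hρQ h)

theorem exists_left_eq_of_forall_card_le (hR : IsRainbow M R)
    (hmax : ∀ S, IsRainbow M S → #S ≤ #R) (hW : (G :: W).Nodup)
    (hWR : ∀ G' ∈ G :: W, ∀ ρ ∈ R, ρ.1 ≠ G') {e : A × B} (he : e ∈ M G)
    (her : ∀ ρ ∈ reach M R (G :: W), ρ.2.2 ≠ e.2) :
    ∃ σ ∈ R \ reach M R W, σ.2.1 = e.1 := by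
  obtain ⟨hGW, hW⟩ := List.nodup_cons.1 hW
  have hGR := hWR G List.mem_cons_self
  -- otherwise `e` extends a replacement of `R` that uncovers `e.1` to a larger rainbow matching
  by_contra! hel
  have hRr : ∀ ρ ∈ R, ρ.2.2 ≠ e.2 := fun ρ hρ h =>
    her ρ ((mem_reach_cons M R).2 (Or.inr ⟨hρ, e, he, h.symm, hel⟩)) h
  obtain ⟨Q, hQ, hQl⟩ := exists_isSwap_forall_left_ne hR W hW
    (fun G' hG' => hWR G' (List.mem_cons_of_mem G hG')) e.1 hel
  have hQr : ∀ q ∈ Q, q.2.2 ≠ e.2 := fun q hq => by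
    obtain ⟨ρ, hρ, hρq⟩ := hQ.exists_right_eq q hq
    exact hρq ▸ hRr ρ hρ
  have hcard := hmax _ (hQ.isRainbow.insert he (hQ.color_ne hGW hGR) hQl hQr)
  rw [card_insert_of_notMem fun h => hQ.color_ne hGW hGR _ h rfl, hQ.card_eq] at hcard
  omega

theorem card_add_card_reach_le (hR : IsRainbow M R) (hmax : ∀ S, IsRainbow M S → #S ≤ #R)
    (hmatch : IsMatching (M G)) (hW : (G :: W).Nodup)
    (hWR : ∀ G' ∈ G :: W, ∀ ρ ∈ R, ρ.1 ≠ G') :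
    #(M G) + #(reach M R W) ≤ #R + #(reach M R (G :: W)) := by
  set rights := (reach M R (G :: W)).image fun ρ => ρ.2.2
  set lefts := (R \ reach M R W).image fun σ => σ.2.1
  have hcover : M G ⊆ (M G).filter (·.2 ∈ rights) ∪ (M G).filter (·.1 ∈ lefts) := by
    intro e he
    by_cases her : e.2 ∈ rights
    · exact mem_union_left _ (mem_filter.2 ⟨he, her⟩)
    obtain ⟨σ, hσ, hσe⟩ := exists_left_eq_of_forall_card_le hR hmax hW hWR he
      fun ρ hρ h => her (mem_image.2 ⟨ρ, hρ, h⟩)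
    exact mem_union_right _ (mem_filter.2 ⟨he, mem_image.2 ⟨σ, hσ, hσe⟩⟩)
  have hrights : #((M G).filter (·.2 ∈ rights)) ≤ #(reach M R (G :: W)) :=
    (card_le_card_of_injOn Prod.snd (fun e he => (mem_filter.1 he).2)
      (hmatch.injOn_snd.mono (coe_subset.2 (filter_subset _ _)))).trans card_image_le
  have hlefts : #((M G).filter (·.1 ∈ lefts)) ≤ #R - #(reach M R W) :=
    (card_le_card_of_injOn Prod.fst (fun e he => (mem_filter.1 he).2)
      (hmatch.injOn_fst.mono (coe_subset.2 (filter_subset _ _)))).trans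
      (card_image_le.trans (card_sdiff_of_subset (reach_subset M R W)).le)
  have := (card_le_card hcover).trans (card_union_le _ _)
  have := card_le_card (reach_subset M R W)
  omega

theorem mul_length_le {n : ℕ} (hR : IsRainbow M R) (hmax : ∀ S, IsRainbow M S → #S ≤ #R)
    (hcard : ∀ i, #(M i) = n) (hmatch : ∀ i, IsMatching (M i)) :
    ∀ W : List (Fin N), W.Nodup → (∀ G ∈ W, ∀ ρ ∈ R, ρ.1 ≠ G) →
      n * W.length ≤ #R * W.length + #(reach M R W)
  | [], _, _ => by simp
  | G :: W, hW, hWR => by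
    have ih := mul_length_le hR hmax hcard hmatch W (List.nodup_cons.1 hW).2
      fun G' hG' => hWR G' (List.mem_cons_of_mem G hG')
    have hstep := card_add_card_reach_le hR hmax (hmatch G) hW hWR
    rw [hcard] at hstep
    rw [List.length_cons, mul_add_one, mul_add_one]
    omega

end Swap

theorem le_card_filter_add_card {α : Type*} (R : Finset (Fin N × α)) :
    N ≤ #(univ.filter fun i => ∀ ρ ∈ R, ρ.1 ≠ i) + #R := by
  calc N = #(univ : Finset (Fin N)) := (card_fin N).symm
    _ ≤ #((univ.filter fun i => ∀ ρ ∈ R, ρ.1 ≠ i) ∪ R.image Prod.fst) := by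
      refine card_le_card fun i _ => ?_
      by_cases hi : ∀ ρ ∈ R, ρ.1 ≠ i
      · exact mem_union_left _ (mem_filter.2 ⟨mem_univ i, hi⟩)
      · push Not at hi
        obtain ⟨ρ, hρ, rfl⟩ := hi
        exact mem_union_right _ (mem_image_of_mem _ hρ)
    _ ≤ _ := (card_union_le _ _).trans (Nat.add_le_add_left card_image_le _)

theorem sub_le_of_mul_le {n k r u : ℕ} (hu : (k + 2) * n / (k + 1) - (k + 1) ≤ u + r)
    (h : n * u ≤ r * u + r) : n - k ≤ r := by
  by_contra! hr
  have hdiv : (k + 2) * n / (k + 1) = n / (k + 1) + n := by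
    rw [show (k + 2) * n = n + (k + 1) * n by ring, Nat.add_mul_div_left _ _ k.succ_pos]
  have hn := Nat.div_add_mod n (k + 1)
  have hmod := Nat.mod_lt n (show 0 < k + 1 by omega)
  generalize n / (k + 1) = q at hdiv hn
  have hq : n - k ≤ (k + 1) * q := by omega
  have hqu : (k + 1) * q ≤ (k + 1) * u := Nat.mul_le_mul_left _ (by omega)
  have hur : (k + 1) * u ≤ r := by
    have := Nat.mul_le_mul_right u (show r + (k + 1) ≤ n by omega)
    rw [add_mul] at this
    omega
  omega

end

theorem rainbow_matching_of_many_matchings_general {A B : Type*} (n k : ℕ)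
    (M : Fin ((k + 2) * n / (k + 1) - (k + 1)) → Finset (A × B))
    (hcard : ∀ i, (M i).card = n) (hmatch : ∀ i, IsMatching (M i)) :
    HasRainbowMatching M (n - k) := by
  obtain ⟨R, hR, hmax⟩ := IsRainbow.exists_forall_card_le M
  set unused := univ.filter fun i => ∀ ρ ∈ R, ρ.1 ≠ i
  have hcount := mul_length_le hR hmax hcard hmatch unused.toList (nodup_toList unused)
    fun G hG => (mem_filter.1 (mem_toList.1 hG)).2
  rw [length_toList] at hcount
  refine hR.hasRainbowMatching (sub_le_of_mul_le (le_card_filter_add_card R) ?_)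
  exact hcount.trans (Nat.add_le_add_left (card_le_card (reach_subset M R _)) _)

/-- If a bipartite multigraph is the union of `⌊(k+2)/(k+1)·n⌋ - (k+1)` matchings of
size `n`, then it has a rainbow matching of size `n - k`. -/
theorem rainbow_matching_of_many_matchings {A B : Type*} (n k : ℕ) (hk : k < n)
    (M : Fin ((k + 2) * n / (k + 1) - (k + 1)) → Finset (A × B))
    (hcard : ∀ i, (M i).card = n) (hmatch : ∀ i, IsMatching (M i)) :
    HasRainbowMatching M (n - k) :=
  rainbow_matching_of_many_matchings_general n k M hcard hmatch
end

section
/- If a bipartite multigraph G with parts A and B is the union of 2n − 1 matchings M₁, …, M_{2n−1}, each of size n, then G contains a rainbow matching of size n. -/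
/-!
With `2n - 1` colors, a rainbow matching `S` of size `s < n` leaves at least `s + 1` colors
unused, each with `n > s` edges. Such a color `c₀` has an edge `e₀` whose `B`-end is not covered
by `S`. If its `A`-end is not covered either, `e₀` extends `S`. Otherwise that `A`-end is covered
by some `v ∈ S`: remove `v` from `S`, `c₀` from the colors and the `A`-end of `e₀` from the graph,
and extend recursively. Requiring that an extension still cover every `B`-vertex covered by the
matching it extends makes the recursion go through, since one of `e₀` and `v` can then be added.
Unwound, this is the alternating-path argument.
-/
open Finset

theorem Finset.injOn_insert_of_apply_notMem_image {α β : Type*} [DecidableEq α] [DecidableEq β]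
    {f : α → β} {s : Finset α} {a : α} (hf : Set.InjOn f s) (ha : f a ∉ s.image f) :
    Set.InjOn f (insert a s : Finset α) := by
  rw [coe_insert, Set.injOn_insert fun h => ha (mem_image_of_mem f h)]
  exact ⟨hf, by simpa using ha⟩

theorem Finset.apply_notMem_image_erase_of_injOn {α β : Type*} [DecidableEq α] [DecidableEq β]
    {f : α → β} {s : Finset α} {a : α} (hf : Set.InjOn f s) (ha : a ∈ s) :
    f a ∉ (s.erase a).image f := by
  simp only [mem_image, mem_erase, not_exists, not_and]
  exact fun b ⟨hba, hb⟩ h => hba (hf hb ha h)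

section

variable {ι A B : Type*}

namespace IsMatching

theorem mono {M M' : Finset (A × B)} (hM : IsMatching M) (h : M' ⊆ M) : IsMatching M' :=
  fun e he f hf hef => hM e (h he) f (h hf) hef

theorem injOn_fst_s2 {M : Finset (A × B)} (hM : IsMatching M) :
    Set.InjOn Prod.fst (M : Set (A × B)) :=
  fun e he f hf hef => by_contra fun hne => (hM e he f hf hne).1 hef

theorem injOn_snd_s2 {M : Finset (A × B)} (hM : IsMatching M) :
    Set.InjOn Prod.snd (M : Set (A × B)) :=
  fun e he f hf hef => by_contra fun hne => (hM e he f hf hne).2 hef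

theorem card_le_card_filter_fst_ne_add_one [DecidableEq A] {M : Finset (A × B)}
    (hM : IsMatching M) (a : A) : #M ≤ #(M.filter (·.1 ≠ a)) + 1 := by
  have hle : #(M.filter (·.1 = a)) ≤ 1 := card_le_one.2 fun e he f hf =>
    hM.injOn_fst_s2 (mem_filter.1 he).1 (mem_filter.1 hf).1
      ((mem_filter.1 he).2.trans (mem_filter.1 hf).2.symm)
  rw [← card_filter_add_card_filter_not (s := M) (·.1 = a)]
  simp only [ne_eq]
  omega

theorem exists_snd_notMem [DecidableEq B] {M : Finset (A × B)} (hM : IsMatching M)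
    {X : Finset B} (hX : #X < #M) : ∃ e ∈ M, e.2 ∉ X := by
  rw [← card_image_of_injOn hM.injOn_snd_s2] at hX
  obtain ⟨b, hb, hbX⟩ := exists_mem_notMem_of_card_lt_card hX
  obtain ⟨e, he, rfl⟩ := mem_image.1 hb
  exact ⟨e, he, hbX⟩

end IsMatching

structure IsRainbowMatching (M : ι → Finset (A × B)) (T : Finset (ι × A × B)) : Prop where
  mem : ∀ p ∈ T, p.2 ∈ M p.1
  injOn_color : Set.InjOn Prod.fst (T : Set (ι × A × B))
  injOn_left : Set.InjOn (fun p : ι × A × B => p.2.1) T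
  injOn_right : Set.InjOn (fun p : ι × A × B => p.2.2) T

namespace IsRainbowMatching

variable {M M' : ι → Finset (A × B)} {S T : Finset (ι × A × B)}

theorem empty : IsRainbowMatching M ∅ :=
  ⟨by simp, by simp, by simp, by simp⟩

theorem of_subset (hT : IsRainbowMatching M T) (hST : S ⊆ T) (hS : ∀ p ∈ S, p.2 ∈ M' p.1) :
    IsRainbowMatching M' S :=
  ⟨hS, hT.injOn_color.mono (coe_subset.2 hST), hT.injOn_left.mono (coe_subset.2 hST),
    hT.injOn_right.mono (coe_subset.2 hST)⟩

theorem insert [DecidableEq ι] [DecidableEq A] [DecidableEq B] (hT : IsRainbowMatching M T)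
    {p : ι × A × B} (hpM : p.2 ∈ M p.1) (hc : p.1 ∉ T.image Prod.fst)
    (ha : p.2.1 ∉ T.image (·.2.1)) (hb : p.2.2 ∉ T.image (·.2.2)) :
    IsRainbowMatching M (insert p T) :=
  ⟨by simpa [hpM] using hT.mem, injOn_insert_of_apply_notMem_image hT.injOn_color hc,
    injOn_insert_of_apply_notMem_image hT.injOn_left ha,
    injOn_insert_of_apply_notMem_image hT.injOn_right hb⟩

theorem hasRainbowMatching {N : ℕ} {M : Fin N → Finset (A × B)} {T : Finset (Fin N × A × B)}
    (hT : IsRainbowMatching M T) :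
    HasRainbowMatching M #T := by
  let g := T.equivFin.symm
  have hg {i j} (h : (g i : Fin N × A × B) = g j) : i = j := g.injective (Subtype.ext h)
  exact ⟨fun i => (g i).1.1, fun i => (g i).1.2,
    fun i j h => hg (hT.injOn_color (g i).2 (g j).2 h), fun i => hT.mem _ (g i).2,
    fun i j hij => ⟨fun h => hij (hg (hT.injOn_left (g i).2 (g j).2 h)),
      fun h => hij (hg (hT.injOn_right (g i).2 (g j).2 h))⟩⟩

end IsRainbowMatching

structure IsAugmentation [DecidableEq ι] [DecidableEq B] (M : ι → Finset (A × B)) (C : Finset ι)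
    (S T : Finset (ι × A × B)) : Prop where
  isRainbowMatching : IsRainbowMatching M T
  card_eq : #T = #S + 1
  colors_subset : T.image Prod.fst ⊆ S.image Prod.fst ∪ C
  right_subset : S.image (·.2.2) ⊆ T.image (·.2.2)

/-- `T'` covers the `B`-side of `S - v` and, by counting, exactly one more vertex. If that is the
`B`-end of `v`, then `T'` covers exactly the `B`-side of `S`, which misses the `B`-end of `e₀`, so
`e₀` can be added; otherwise `v` itself can be put back. -/
theorem IsAugmentation.lift [DecidableEq ι] [DecidableEq A] [DecidableEq B]
    {M : ι → Finset (A × B)} {C : Finset ι} {S T' : Finset (ι × A × B)} {v : ι × A × B} {c₀ : ι}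
    {e₀ : A × B} (hS : IsRainbowMatching M S) (hSC : Disjoint (S.image Prod.fst) C) (hv : v ∈ S)
    (hc₀ : c₀ ∈ C) (he₀ : e₀ ∈ M c₀) (hva : v.2.1 = e₀.1) (he₀B : e₀.2 ∉ S.image (·.2.2))
    (hT' : IsAugmentation (fun c => (M c).filter (·.1 ≠ e₀.1)) (C.erase c₀) (S.erase v) T') :
    ∃ T, IsAugmentation M C S T := by
  have he₀T' : e₀.1 ∉ T'.image (·.2.1) := fun h => by
    obtain ⟨p, hp, hpa⟩ := mem_image.1 h
    exact (mem_filter.1 (hT'.isRainbowMatching.mem p hp)).2 hpa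
  have hT : IsRainbowMatching M T' := hT'.isRainbowMatching.of_subset subset_rfl
    fun p hp => (mem_filter.1 (hT'.isRainbowMatching.mem p hp)).1
  have hT'card : #T' = #S := by
    rw [hT'.card_eq, card_erase_of_mem hv]
    have := card_pos.2 ⟨v, hv⟩
    omega
  have hT'C : T'.image Prod.fst ⊆ S.image Prod.fst ∪ C := hT'.colors_subset.trans
    (union_subset_union (image_subset_image (erase_subset _ _)) (erase_subset _ _))
  have hBS : S.image (·.2.2) = insert v.2.2 ((S.erase v).image (·.2.2)) := by
    conv_lhs => rw [← insert_erase hv]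
    exact image_insert _ _ _
  by_cases hvB : v.2.2 ∈ T'.image (·.2.2)
  · have hB : S.image (·.2.2) = T'.image (·.2.2) := by
      refine eq_of_subset_of_card_le (hBS ▸ insert_subset hvB hT'.right_subset) ?_
      rw [card_image_of_injOn hS.injOn_right, ← hT'card]
      exact card_image_le
    have hc₀T' : c₀ ∉ T'.image Prod.fst := fun h =>
      (mem_union.1 (hT'.colors_subset h)).elim
        (fun h' => disjoint_right.1 hSC hc₀ (image_subset_image (erase_subset _ _) h'))
        (notMem_erase c₀ C)
    refine ⟨insert (c₀, e₀) T', hT.insert he₀ hc₀T' he₀T' (hB ▸ he₀B),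
      by rw [card_insert_of_notMem fun h => hc₀T' (mem_image_of_mem _ h), hT'card], ?_,
      hB.subset.trans (image_subset_image (subset_insert _ _))⟩
    rw [image_insert]
    exact insert_subset (mem_union_right _ hc₀) hT'C
  · have hvT' : v.1 ∉ T'.image Prod.fst := fun h =>
      (mem_union.1 (hT'.colors_subset h)).elim
        (apply_notMem_image_erase_of_injOn hS.injOn_color hv)
        (fun h' => disjoint_left.1 hSC (mem_image_of_mem _ hv) (mem_of_mem_erase h'))
    refine ⟨insert v T', hT.insert (hS.mem v hv) hvT' (hva ▸ he₀T') hvB,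
      by rw [card_insert_of_notMem fun h => hvT' (mem_image_of_mem _ h), hT'card], ?_, ?_⟩
    · rw [image_insert]
      exact insert_subset (mem_union_left _ (mem_image_of_mem _ hv)) hT'C
    · rw [hBS, image_insert]
      exact insert_subset_insert _ hT'.right_subset

theorem exists_isAugmentation [DecidableEq ι] [DecidableEq A] [DecidableEq B]
    {M : ι → Finset (A × B)} {S : Finset (ι × A × B)} {C : Finset ι}
    (hS : IsRainbowMatching M S) (hSC : Disjoint (S.image Prod.fst) C) (hC : #S < #C)
    (hM : ∀ c ∈ C, IsMatching (M c)) (hMcard : ∀ c ∈ C, #S < #(M c)) :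
    ∃ T, IsAugmentation M C S T := by
  induction S using Finset.strongInduction generalizing C M with
  | H S ih =>
  obtain ⟨c₀, hc₀⟩ : C.Nonempty := card_pos.1 (by omega)
  have hc₀S : c₀ ∉ S.image Prod.fst := disjoint_right.1 hSC hc₀
  obtain ⟨e₀, he₀, he₀B⟩ :=
    (hM c₀ hc₀).exists_snd_notMem (card_image_le.trans_lt (hMcard c₀ hc₀))
  by_cases he₀A : e₀.1 ∉ S.image (·.2.1)
  · refine ⟨insert (c₀, e₀) S, hS.insert he₀ hc₀S he₀A he₀B,
      card_insert_of_notMem fun h => hc₀S (mem_image_of_mem _ h), ?_,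
      image_subset_image (subset_insert _ _)⟩
    rw [image_insert]
    exact insert_subset (mem_union_right _ hc₀) subset_union_left
  obtain ⟨v, hv, hva⟩ := mem_image.1 (not_not.1 he₀A)
  have hSpos : 0 < #S := card_pos.2 ⟨v, hv⟩
  have hS' : IsRainbowMatching (fun c => (M c).filter (·.1 ≠ e₀.1)) (S.erase v) :=
    hS.of_subset (erase_subset _ _) fun p hp => mem_filter.2 ⟨hS.mem p (mem_of_mem_erase hp),
      fun h => ne_of_mem_erase hp (hS.injOn_left (mem_of_mem_erase hp) hv (h.trans hva.symm))⟩
  obtain ⟨T', hT'⟩ := ih (S.erase v) (erase_ssubset hv) (C := C.erase c₀) hS'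
    (disjoint_of_subset_left (image_subset_image (erase_subset _ _))
      (disjoint_of_subset_right (erase_subset _ _) hSC))
    (by rw [card_erase_of_mem hv, card_erase_of_mem hc₀]; omega)
    (fun c hc => (hM c (mem_of_mem_erase hc)).mono (filter_subset _ _))
    (fun c hc => by
      have := (hM c (mem_of_mem_erase hc)).card_le_card_filter_fst_ne_add_one e₀.1
      have := hMcard c (mem_of_mem_erase hc)
      rw [card_erase_of_mem hv]
      omega)
  exact hT'.lift hS hSC hv hc₀ he₀ hva he₀B

end

/-- Drisko's theorem: if a bipartite multigraph is the union of `2n - 1` matchings of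
size `n`, then it has a rainbow matching of size `n`. -/
theorem drisko {A B : Type*} (n : ℕ)
    (M : Fin (2 * n - 1) → Finset (A × B))
    (hcard : ∀ i, (M i).card = n) (hmatch : ∀ i, IsMatching (M i)) :
    HasRainbowMatching M n := by
  classical
  suffices ∀ s ≤ n, ∃ T, IsRainbowMatching M T ∧ #T = s by
    obtain ⟨T, hT, hTcard⟩ := this n le_rfl
    simpa only [hTcard] using hT.hasRainbowMatching
  intro s hs
  induction s with
  | zero => exact ⟨∅, .empty, card_empty⟩
  | succ s ih =>
    obtain ⟨S, hS, rfl⟩ := ih (by omega)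
    have hunused : #S < #(univ \ S.image Prod.fst) := by
      rw [card_univ_sdiff, card_image_of_injOn hS.injOn_color, Fintype.card_fin]
      omega
    obtain ⟨T, hT⟩ := exists_isAugmentation hS disjoint_sdiff
      hunused (fun c _ => hmatch c) (fun c _ => by rw [hcard]; omega)
    exact ⟨T, hT.isRainbowMatching, hT.card_eq⟩
end

section
/- Let n and k be integers with ⌊n/2⌋ ≤ k < n. If a bipartite multigraph G with parts A and B is the union of n − k matchings M₁, …, M_{n−k}, each of size n, then G contains a rainbow matching of size n − k. -/
/-- For `⌊n/2⌋ ≤ k < n`: if a bipartite multigraph is the union of `n - k` matchings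
of size `n`, then it has a rainbow matching of size `n - k`. -/
theorem rainbow_matching_large_k {A B : Type*} (n k : ℕ) (hk₁ : n / 2 ≤ k) (hk₂ : k < n)
    (M : Fin (n - k) → Finset (A × B))
    (hcard : ∀ i, (M i).card = n) (hmatch : ∀ i, IsMatching (M i)) :
    HasRainbowMatching M (n - k) := by
  classical
  have key : ∀ m, ∀ hm : m ≤ n - k, ∃ e : Fin m → A × B,
      (∀ i : Fin m, e i ∈ M ⟨i, lt_of_lt_of_le i.isLt hm⟩) ∧
      ∀ i j, i ≠ j → (e i).1 ≠ (e j).1 ∧ (e i).2 ≠ (e j).2 := by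
    intro m
    induction m with
    | zero => exact fun _ => ⟨fun i => i.elim0, fun i => i.elim0, fun i => i.elim0⟩
    | succ m ih =>
      intro hm
      obtain ⟨e, he, hd⟩ := ih (Nat.le_of_succ_le hm)
      set m' : Fin (n - k) := ⟨m, hm⟩ with hm'
      set S : Finset (A × B) :=
        (M m').filter (fun f => ∃ i : Fin m, f.1 = (e i).1 ∨ f.2 = (e i).2) with hS
      have hsub : S ⊆ Finset.univ.biUnion (fun i : Fin m =>
          (M m').filter (fun f => f.1 = (e i).1) ∪ (M m').filter (fun f => f.2 = (e i).2)) := by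
        intro f hf
        rw [hS, Finset.mem_filter] at hf
        obtain ⟨hfM, i, hi⟩ := hf
        rw [Finset.mem_biUnion]
        exact ⟨i, Finset.mem_univ i, by
          rw [Finset.mem_union, Finset.mem_filter, Finset.mem_filter]
          rcases hi with h | h
          · exact Or.inl ⟨hfM, h⟩
          · exact Or.inr ⟨hfM, h⟩⟩
      have hcard1 : ∀ (i : Fin m),
          ((M m').filter (fun f => f.1 = (e i).1) ∪
            (M m').filter (fun f => f.2 = (e i).2)).card ≤ 2 := by
        intro i
        have h1 : ((M m').filter (fun f => f.1 = (e i).1)).card ≤ 1 := by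
          apply Finset.card_le_one.2
          intro a ha b hb
          rw [Finset.mem_filter] at ha hb
          by_contra hne
          exact (hmatch m' a ha.1 b hb.1 hne).1 (ha.2.trans hb.2.symm)
        have h2 : ((M m').filter (fun f => f.2 = (e i).2)).card ≤ 1 := by
          apply Finset.card_le_one.2
          intro a ha b hb
          rw [Finset.mem_filter] at ha hb
          by_contra hne
          exact (hmatch m' a ha.1 b hb.1 hne).2 (ha.2.trans hb.2.symm)
        calc _ ≤ _ + _ := Finset.card_union_le _ _
          _ ≤ 2 := by omega
      have hScard : S.card ≤ 2 * m := by
        calc S.card ≤ _ := Finset.card_le_card hsub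
          _ ≤ ∑ i : Fin m, ((M m').filter (fun f => f.1 = (e i).1) ∪
              (M m').filter (fun f => f.2 = (e i).2)).card := Finset.card_biUnion_le
          _ ≤ ∑ _i : Fin m, 2 := Finset.sum_le_sum (fun i _ => hcard1 i)
          _ = 2 * m := by simp [mul_comm]
      have hlt : S.card < (M m').card := by
        rw [hcard m']
        omega
      have hne : (M m' \ S).Nonempty := Finset.card_pos.1 (by
        have := Finset.le_card_sdiff S (M m')
        omega)
      obtain ⟨f, hf⟩ := hne
      rw [Finset.mem_sdiff] at hf
      obtain ⟨hfM, hfS⟩ := hf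
      have hfr : ∀ i : Fin m, f.1 ≠ (e i).1 ∧ f.2 ≠ (e i).2 := by
        intro i
        constructor <;> intro h <;> exact hfS (by
          rw [hS, Finset.mem_filter]; exact ⟨hfM, i, by tauto⟩)
      refine ⟨Fin.snoc e f, ?_, ?_⟩
      · intro i
        refine Fin.lastCases ?_ ?_ i
        · simpa using hfM
        · intro j
          simpa using he j
      · intro i j hij
        refine Fin.lastCases (fun j hij => ?_) (fun i' => Fin.lastCases (fun hij => ?_) (fun j' hij => ?_)) i j hij
        · refine Fin.lastCases (fun hij => absurd rfl hij) (fun j' _ => ?_) j hij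
          simpa using hfr j'
        · have := hfr i'
          simp only [Fin.snoc_last, Fin.snoc_castSucc]
          exact ⟨(this.1 ∘ Eq.symm), (this.2 ∘ Eq.symm)⟩
        · simp only [Fin.snoc_castSucc]
          exact hd i' j' (fun h => hij (congrArg Fin.castSucc h))
  obtain ⟨e, he, hd⟩ := key (n - k) le_rfl
  exact ⟨id, e, Function.injective_id, fun i => by simpa using he i, hd⟩
end

section
/- For every integer n ≥ 2 there exists a bipartite multigraph G with parts A and B that is the union of 2n − 2 matchings, each of size n, containing no rainbow matching of size n. (One may take A and B to be the two color classes of a cycle on 2n vertices: n − 1 of the matchings equal one perfect matching of the cycle and the remaining n − 1 matchings equal the other perfect matching.) -/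
open Finset Function

section ShiftMatching

variable {G : Type*} [AddCommGroup G] [Fintype G]

def shiftMatching (d : G) : Finset (G × G) :=
  univ.map ⟨fun x => (x, x + d), fun _ _ h => (Prod.mk.inj h).1⟩

lemma mem_shiftMatching {d : G} {e : G × G} : e ∈ shiftMatching d ↔ e.2 = e.1 + d := by
  simp only [shiftMatching, mem_map, mem_univ, true_and]
  constructor
  · rintro ⟨x, rfl⟩
    rfl
  · intro h
    exact ⟨e.1, Prod.ext rfl h.symm⟩

lemma card_shiftMatching (d : G) : #(shiftMatching d) = Fintype.card G := by
  simp [shiftMatching]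

lemma isMatching_shiftMatching (d : G) : IsMatching (shiftMatching d) := by
  intro e he f hf hne
  rw [mem_shiftMatching] at he hf
  have hfst : e.1 ≠ f.1 := fun h => hne (Prod.ext h (by rw [he, hf, h]))
  exact ⟨hfst, by rw [he, hf]; simpa using hfst⟩

lemma sum_fst_eq_sum_snd_of_injective {ι : Type*} [Fintype ι] {e : ι → G × G}
    (hcard : Fintype.card ι = Fintype.card G) (hfst : Injective fun i => (e i).1)
    (hsnd : Injective fun i => (e i).2) :
    ∑ i, (e i).1 = ∑ i, (e i).2 := by
  have hfst' := (Fintype.bijective_iff_injective_and_card _).2 ⟨hfst, hcard⟩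
  have hsnd' := (Fintype.bijective_iff_injective_and_card _).2 ⟨hsnd, hcard⟩
  exact (Fintype.sum_bijective _ hfst' _ id fun _ => rfl).trans
    (Fintype.sum_bijective _ hsnd' _ id fun _ => rfl).symm

lemma sum_eq_zero_of_hasRainbowMatching_shiftMatching {N s : ℕ} {d : Fin N → G}
    (hs : s = Fintype.card G) (h : HasRainbowMatching (fun j => shiftMatching (d j)) s) :
    ∃ c : Fin s → Fin N, Injective c ∧ ∑ i, d (c i) = 0 := by
  obtain ⟨c, e, hc, he, hdisj⟩ := h
  refine ⟨c, hc, ?_⟩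
  have hfst : Injective fun i => (e i).1 := fun i j hij =>
    by_contra fun hne => (hdisj i j hne).1 hij
  have hsnd : Injective fun i => (e i).2 := fun i j hij =>
    by_contra fun hne => (hdisj i j hne).2 hij
  have hsum := sum_fst_eq_sum_snd_of_injective (by simp [hs]) hfst hsnd
  simp only [mem_shiftMatching] at he
  simpa only [he, sum_add_distrib, left_eq_add] using hsum

end ShiftMatching

lemma card_filter_comp_le_of_injective {α β : Type*} [Fintype α] [Fintype β] {c : α → β}
    (hc : Injective c) (p : β → Prop) [DecidablePred p] : #{i | p (c i)} ≤ #{j | p j} :=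
  card_le_card_of_injOn c (fun i hi => by simpa using hi) hc.injOn

lemma Fin.card_filter_comp_val_lt_bounds {s N m : ℕ} {c : Fin s → Fin N} (hc : Injective c)
    (hm : m ≤ N) : s - (N - m) ≤ #{i | (c i : ℕ) < m} ∧ #{i | (c i : ℕ) < m} ≤ m := by
  have hlt := card_filter_comp_le_of_injective hc fun j => (j : ℕ) < m
  have hge := card_filter_comp_le_of_injective hc fun j => ¬ (j : ℕ) < m
  have hsplit := card_filter_add_card_filter_not (s := univ) fun i => (c i : ℕ) < m
  have hsplit' := card_filter_add_card_filter_not (s := univ) fun j : Fin N => (j : ℕ) < m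
  simp only [Fin.card_filter_val_lt, card_univ, Fintype.card_fin] at hlt hsplit hsplit'
  omega

/-- Sharpness of Drisko's theorem: for every `n ≥ 2` there is a bipartite multigraph
that is the union of `2n - 2` matchings of size `n` and has no rainbow matching of
size `n`. -/
theorem drisko_sharp (n : ℕ) (hn : 2 ≤ n) :
    ∃ (A B : Type) (M : Fin (2 * n - 2) → Finset (A × B)),
      (∀ i, (M i).card = n) ∧ (∀ i, IsMatching (M i)) ∧
        ¬ HasRainbowMatching M n := by
  have : NeZero n := ⟨by omega⟩
  refine ⟨ZMod n, ZMod n, fun j => shiftMatching (if (j : ℕ) < n - 1 then 1 else 0),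
    fun j => by rw [card_shiftMatching, ZMod.card], fun j => isMatching_shiftMatching _,
    fun h => ?_⟩
  obtain ⟨c, hc, hsum⟩ := sum_eq_zero_of_hasRainbowMatching_shiftMatching (ZMod.card n).symm h
  rw [sum_boole, ZMod.natCast_eq_zero_iff] at hsum
  have hbounds := Fin.card_filter_comp_val_lt_bounds hc (m := n - 1) (by omega)
  have := Nat.le_of_dvd (by omega) hsum
  omega
end

section
/- For every even integer n = 2k with k ≥ 1, there exists a (not necessarily bipartite) multigraph on 2n vertices that is the union of 2n − 1 matchings, each of size n, containing no rainbow matching of size n. Concretely, on vertex set {1, 2, …, 2n}, take M₁ = ⋯ = M_{n−1} = {12, 34, …, (2n−1)(2n)}, M_n = ⋯ = M_{2n−2} = {23, 45, …, (2n)1}, and M_{2n−1} = {13, 24, 57, 68, …, (2n−3)(2n−1), (2n−2)(2n)}; these 2n − 1 matchings of size n admit no rainbow matching of size n. -/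
/-- A finite set of edges (unordered pairs of vertices) of a multigraph is a matching
if no edge is a loop and distinct edges share no vertex. -/
def IsSym2Matching {V : Type*} (S : Finset (Sym2 V)) : Prop :=
  (∀ e ∈ S, ¬ e.IsDiag) ∧ ∀ e ∈ S, ∀ f ∈ S, e ≠ f → ∀ v ∈ e, v ∉ f

/-- Given matchings `M 0, …, M (N-1)` of a multigraph, a rainbow matching of size `s`
consists of `s` pairwise vertex-disjoint edges coming from pairwise distinct
matchings. -/
def HasSym2RainbowMatching {V : Type*} {N : ℕ} (M : Fin N → Finset (Sym2 V)) (s : ℕ) :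
    Prop :=
  ∃ (c : Fin s → Fin N) (e : Fin s → Sym2 V),
    Function.Injective c ∧ (∀ i, e i ∈ M (c i)) ∧
      ∀ i j, i ≠ j → ∀ v ∈ e i, v ∉ e j

/-- The `2n - 1` matchings of the construction, on the vertex set `ZMod (2n)`
(the `2n` vertices `1, …, 2n` of the paper, written `0, …, 2n-1`):
the first `n - 1` matchings are `{01, 23, …, (2n-2)(2n-1)}`, the next `n - 1`
matchings are `{12, 34, …, (2n-1)0}`, and the last one is
`{02, 13, 46, 57, …, (2n-4)(2n-2), (2n-3)(2n-1)}`. -/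
def driskoExample (n : ℕ) : Fin (2 * n - 1) → Finset (Sym2 (ZMod (2 * n))) := fun i =>
  if (i : ℕ) < n - 1 then
    (Finset.range n).image fun j => s(((2 * j : ℕ) : ZMod (2 * n)), ((2 * j + 1 : ℕ) : ZMod (2 * n)))
  else if (i : ℕ) < 2 * n - 2 then
    (Finset.range n).image fun j => s(((2 * j + 1 : ℕ) : ZMod (2 * n)), ((2 * j + 2 : ℕ) : ZMod (2 * n)))
  else
    (Finset.range n).image fun j =>
      s(((4 * (j / 2) + j % 2 : ℕ) : ZMod (2 * n)), ((4 * (j / 2) + j % 2 + 2 : ℕ) : ZMod (2 * n)))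

private lemma drisko_mod2 {m x : ℕ} (hm : 0 < m) (hx : x < 2 * m) :
    x % m = if x < m then x else x - m := by
  split_ifs with h
  · exact Nat.mod_eq_of_lt h
  · rw [Nat.mod_eq_sub_mod (by omega)]
    exact Nat.mod_eq_of_lt (by omega)

/-- Transfer an equality of casts in `ZMod (2*n)` to natural-number information. -/
private lemma drisko_modeq {n x y : ℕ} (h : (x : ZMod (2 * n)) = (y : ZMod (2 * n)))
    (hn : 0 < n) (hx : x < 4 * n) (hy : y < 4 * n) :
    x = y ∨ x = y + 2 * n ∨ y = x + 2 * n := by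
  rw [ZMod.natCast_eq_natCast_iff] at h
  have h' : x % (2 * n) = y % (2 * n) := h
  have e1 := drisko_mod2 (m := 2 * n) (x := x) (by omega) (by omega)
  have e2 := drisko_mod2 (m := 2 * n) (x := y) (by omega) (by omega)
  rw [e1, e2] at h'
  split_ifs at h' <;> omega

/-- Every edge of the construction has one of three explicit shapes,
determined by the index of the matching it belongs to. -/
private lemma drisko_shape {n : ℕ} (i : Fin (2 * n - 1)) {E : Sym2 (ZMod (2 * n))}
    (hE : E ∈ driskoExample n i) :
    (∃ j < n, E = s(((2 * j : ℕ) : ZMod (2 * n)), ((2 * j + 1 : ℕ) : ZMod (2 * n))) ∧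
        (i : ℕ) < n - 1) ∨
    (∃ j < n, E = s(((2 * j + 1 : ℕ) : ZMod (2 * n)), ((2 * j + 2 : ℕ) : ZMod (2 * n))) ∧
        n - 1 ≤ (i : ℕ) ∧ (i : ℕ) < 2 * n - 2) ∨
    (∃ j < n, E = s(((4 * (j / 2) + j % 2 : ℕ) : ZMod (2 * n)),
        ((4 * (j / 2) + j % 2 + 2 : ℕ) : ZMod (2 * n))) ∧ (i : ℕ) = 2 * n - 2) := by
  unfold driskoExample at hE
  split_ifs at hE with h1 h2
  · obtain ⟨j, hj, hEj⟩ := Finset.mem_image.1 hE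
    exact Or.inl ⟨j, Finset.mem_range.1 hj, hEj.symm, h1⟩
  · obtain ⟨j, hj, hEj⟩ := Finset.mem_image.1 hE
    exact Or.inr (Or.inl ⟨j, Finset.mem_range.1 hj, hEj.symm, by omega, h2⟩)
  · obtain ⟨j, hj, hEj⟩ := Finset.mem_image.1 hE
    have := i.isLt
    exact Or.inr (Or.inr ⟨j, Finset.mem_range.1 hj, hEj.symm, by omega⟩)

/-- For every even `n = 2k ≥ 2`, the `2n - 1` sets `driskoExample n` are matchings of
size `n` of a multigraph on `2n` vertices, yet they admit no rainbow matching of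
size `n`: Drisko's theorem fails for general (non-bipartite) multigraphs. -/
theorem drisko_fails_nonbipartite (n k : ℕ) (hk : 1 ≤ k) (hn : n = 2 * k) :
    (∀ i, (driskoExample n i).card = n) ∧
      (∀ i, IsSym2Matching (driskoExample n i)) ∧
        ¬ HasSym2RainbowMatching (driskoExample n) n := by
  have hn2 : 2 ≤ n := by omega
  haveI : NeZero (2 * n) := ⟨by omega⟩
  refine ⟨?_, ?_, ?_⟩
  · -- cardinality
    intro i
    unfold driskoExample
    split_ifs <;>
    · refine (Finset.card_image_of_injOn ?_).trans (Finset.card_range n)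
      intro j hj j' hj' h
      simp only [Finset.coe_range, Set.mem_Iio] at hj hj'
      rw [Sym2.eq_iff] at h
      rcases h with ⟨h1, h2⟩ | ⟨h1, h2⟩ <;>
        rcases drisko_modeq h1 (by omega) (by omega) (by omega) with h | h | h <;> omega
  · -- matching property
    intro i
    constructor
    · intro E hE
      rcases drisko_shape i hE with ⟨j, hj, hEj, -⟩ | ⟨j, hj, hEj, -, -⟩ | ⟨j, hj, hEj, -⟩ <;>
      · rw [hEj, Sym2.mk_isDiag_iff]
        intro h
        rcases drisko_modeq h (by omega) (by omega) (by omega) with h | h | h <;> omega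
    · intro E hEm F hFm hEF v hvE hvF
      rcases drisko_shape i hEm with ⟨j, hj, hEj, hc⟩ | ⟨j, hj, hEj, hc, hc2⟩ | ⟨j, hj, hEj, hc⟩ <;>
        rcases drisko_shape i hFm with ⟨j', hj', hFj, hd⟩ | ⟨j', hj', hFj, hd, hd2⟩ |
          ⟨j', hj', hFj, hd⟩ <;>
      first
        | omega
        | (have hjj' : j ≠ j' := by rintro rfl; exact hEF (hEj.trans hFj.symm)
           rw [hEj, Sym2.mem_iff] at hvE
           rw [hFj, Sym2.mem_iff] at hvF
           rcases hvE with rfl | rfl <;> rcases hvF with h | h <;>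
             rcases drisko_modeq h (by omega) (by omega) (by omega) with h | h | h <;> omega)
  · -- no rainbow matching
    rintro ⟨c, e, hcinj, hmem, hdisj⟩
    have hshape := fun i => drisko_shape (c i) (hmem i)
    -- every edge has two distinct endpoints
    have hnd : ∀ i, ∃ a b : ZMod (2 * n), e i = s(a, b) ∧ a ≠ b := by
      intro i
      rcases hshape i with ⟨j, hj, hE, -⟩ | ⟨j, hj, hE, -, -⟩ | ⟨j, hj, hE, -⟩ <;>
      · refine ⟨_, _, hE, fun hab => ?_⟩
        rcases drisko_modeq hab (by omega) (by omega) (by omega) with h | h | h <;> omega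
    -- every vertex is covered by some edge
    choose a b hab hne using hnd
    have hφmem : ∀ (i : Fin n) (t : Bool), (if t then a i else b i) ∈ e i := by
      intro i t
      cases t <;> rw [hab i] <;> simp [Sym2.mem_iff]
    have hbij : Function.Bijective (fun p : Fin n × Bool => if p.2 then a p.1 else b p.1) := by
      rw [Fintype.bijective_iff_injective_and_card]
      constructor
      · rintro ⟨i, t⟩ ⟨i', t'⟩ hp
        simp only at hp
        have hii' : i = i' := by
          by_contra hii
          exact hdisj i i' hii _ (hφmem i t) (by rw [hp]; exact hφmem i' t')
        subst hii'
        cases t <;> cases t'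
        · rfl
        · exact absurd (show a i = b i from (show b i = a i from hp).symm) (hne i)
        · exact absurd (show a i = b i from hp) (hne i)
        · rfl
      · rw [Fintype.card_prod, Fintype.card_fin, Fintype.card_bool, ZMod.card]
        ring
    have hcover : ∀ v : ZMod (2 * n), ∃ i, v ∈ e i := by
      intro v
      obtain ⟨⟨i, t⟩, hp⟩ := hbij.2 v
      exact ⟨i, by rw [← hp]; exact hφmem i t⟩
    -- no edge comes from the last matching
    have hnoC : ∀ i, ¬ ((c i : ℕ) = 2 * n - 2) := by
      intro i hCi
      rcases hshape i with ⟨j, hj, hE, hlt⟩ | ⟨j, hj, hE, h1, h2⟩ | ⟨j, hj, hE, -⟩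
      · omega
      · omega
      obtain ⟨x, hxdef, hx2⟩ : ∃ x : ℕ, x = 4 * (j / 2) + j % 2 ∧ x + 2 < 2 * n :=
        ⟨_, rfl, by omega⟩
      rw [← hxdef] at hE
      obtain ⟨i', hi'⟩ := hcover ((x + 1 : ℕ) : ZMod (2 * n))
      have hne' : i' ≠ i := by
        rintro rfl
        rw [hE, Sym2.mem_iff] at hi'
        rcases hi' with h | h <;>
          rcases drisko_modeq h (by omega) (by omega) (by omega) with h | h | h <;> omega
      rcases hshape i' with ⟨j', hj', hE', -⟩ | ⟨j', hj', hE', -, -⟩ | ⟨j', hj', hE', hci'⟩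
      · rw [hE', Sym2.mem_iff] at hi'
        rcases hi' with h | h
        · rcases drisko_modeq h (by omega) (by omega) (by omega) with h | h | h
          · exact hdisj i' i hne' (((2 * j' + 1 : ℕ) : ZMod (2 * n)))
              (by rw [hE', Sym2.mem_iff]; right; rfl)
              (by rw [hE, Sym2.mem_iff]; right; rw [show 2 * j' + 1 = x + 2 from by omega])
          · omega
          · omega
        · rcases drisko_modeq h (by omega) (by omega) (by omega) with h | h | h
          · exact hdisj i' i hne' (((2 * j' : ℕ) : ZMod (2 * n)))
              (by rw [hE', Sym2.mem_iff]; left; rfl)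
              (by rw [hE, Sym2.mem_iff]; left; rw [show 2 * j' = x from by omega])
          · omega
          · omega
      · rw [hE', Sym2.mem_iff] at hi'
        rcases hi' with h | h
        · rcases drisko_modeq h (by omega) (by omega) (by omega) with h | h | h
          · exact hdisj i' i hne' (((2 * j' + 2 : ℕ) : ZMod (2 * n)))
              (by rw [hE', Sym2.mem_iff]; right; rfl)
              (by rw [hE, Sym2.mem_iff]; right; rw [show 2 * j' + 2 = x + 2 from by omega])
          · omega
          · omega
        · rcases drisko_modeq h (by omega) (by omega) (by omega) with h | h | h
          · exact hdisj i' i hne' (((2 * j' + 1 : ℕ) : ZMod (2 * n)))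
              (by rw [hE', Sym2.mem_iff]; left; rfl)
              (by rw [hE, Sym2.mem_iff]; left; rw [show 2 * j' + 1 = x from by omega])
          · omega
          · omega
      · exact hne' (hcinj (Fin.val_injective (show ((c i' : ℕ)) = (c i : ℕ) by omega)))
    -- hence every edge is a "path edge" with an explicit left endpoint,
    -- whose parity determines the colour class
    have hAB : ∀ i, ∃ y < 2 * n,
        e i = s(((y : ℕ) : ZMod (2 * n)), ((y + 1 : ℕ) : ZMod (2 * n))) ∧
          ((y % 2 = 0 ∧ (c i : ℕ) < n - 1) ∨
            (y % 2 = 1 ∧ n - 1 ≤ (c i : ℕ) ∧ (c i : ℕ) < 2 * n - 2)) := by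
      intro i
      rcases hshape i with ⟨j, hj, hE, hlt⟩ | ⟨j, hj, hE, h1, h2⟩ | ⟨j, hj, hE, hci⟩
      · exact ⟨2 * j, by omega, hE, Or.inl ⟨by omega, hlt⟩⟩
      · exact ⟨2 * j + 1, by omega,
          by rw [show 2 * j + 1 + 1 = 2 * j + 2 from by omega]; exact hE,
          Or.inr ⟨by omega, h1, h2⟩⟩
      · exact absurd hci (hnoC i)
    -- adding a constant to both sides of a cast equality
    have hcastadd : ∀ u v w : ℕ, ((u : ℕ) : ZMod (2 * n)) = ((v : ℕ) : ZMod (2 * n)) →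
        ((u + w : ℕ) : ZMod (2 * n)) = ((v + w : ℕ) : ZMod (2 * n)) := by
      intro u v w h
      push_cast
      rw [h]
    -- propagation: to the right of a path edge there is another path edge
    have hprop : ∀ (i : Fin n) (y : ℕ), y < 2 * n →
        e i = s(((y : ℕ) : ZMod (2 * n)), ((y + 1 : ℕ) : ZMod (2 * n))) →
        ∃ (i' : Fin n) (z : ℕ), z < 2 * n ∧
          ((z : ℕ) : ZMod (2 * n)) = ((y + 2 : ℕ) : ZMod (2 * n)) ∧
          e i' = s(((z : ℕ) : ZMod (2 * n)), ((z + 1 : ℕ) : ZMod (2 * n))) := by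
      intro i y hy hE
      obtain ⟨i', hi'⟩ := hcover ((y + 2 : ℕ) : ZMod (2 * n))
      obtain ⟨z, hz, hE', -⟩ := hAB i'
      refine ⟨i', z, hz, ?_, hE'⟩
      rw [hE', Sym2.mem_iff] at hi'
      rcases hi' with h | h
      · exact h.symm
      exfalso
      have hzy : ((z : ℕ) : ZMod (2 * n)) = ((y + 1 : ℕ) : ZMod (2 * n)) := by
        rcases drisko_modeq h (by omega) (by omega) (by omega) with h' | h' | h'
        · rw [show z = y + 1 from by omega]
        · rw [show z = 0 from by omega, show y + 1 = 2 * n from by omega,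
            Nat.cast_zero, ZMod.natCast_self]
        · omega
      have hne' : i' ≠ i := by
        rintro rfl
        rw [hE, Sym2.eq_iff] at hE'
        rcases hE' with ⟨h1, h2⟩ | ⟨h1, h2⟩ <;>
          rcases drisko_modeq h1 (by omega) (by omega) (by omega) with h' | h' | h' <;>
            rcases drisko_modeq h (by omega) (by omega) (by omega) with h'' | h'' | h'' <;> omega
      exact hdisj i' i hne' _ (by rw [hE']; exact Sym2.mem_mk_left _ _)
        (by rw [hE, hzy]; exact Sym2.mem_mk_right _ _)
    -- iterate the propagation
    obtain ⟨y₀, hy₀, hE₀, -⟩ := hAB ⟨0, by omega⟩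
    have hchain : ∀ m : ℕ, ∃ (i : Fin n) (z : ℕ), z < 2 * n ∧
        ((z : ℕ) : ZMod (2 * n)) = ((y₀ + 2 * m : ℕ) : ZMod (2 * n)) ∧
        e i = s(((z : ℕ) : ZMod (2 * n)), ((z + 1 : ℕ) : ZMod (2 * n))) := by
      intro m
      induction m with
      | zero => exact ⟨⟨0, by omega⟩, y₀, hy₀, by norm_num, hE₀⟩
      | succ m ih =>
        obtain ⟨i, z, hz, hcast, hE⟩ := ih
        obtain ⟨i', z', hz', hcast', hE'⟩ := hprop i z hz hE
        refine ⟨i', z', hz', ?_, hE'⟩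
        calc ((z' : ℕ) : ZMod (2 * n)) = ((z + 2 : ℕ) : ZMod (2 * n)) := hcast'
          _ = ((y₀ + 2 * m + 2 : ℕ) : ZMod (2 * n)) := hcastadd _ _ 2 hcast
          _ = ((y₀ + 2 * (m + 1) : ℕ) : ZMod (2 * n)) := by
              rw [show y₀ + 2 * m + 2 = y₀ + 2 * (m + 1) from by omega]
    choose I Z hZlt hZcast hZE using hchain
    -- the edges produced for m = 0, …, n-1 are pairwise distinct
    have hIinj : ∀ m, m < n → ∀ m', m' < n → I m = I m' → m = m' := by
      intro m hm m' hm' hII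
      by_contra hmm
      have hEE : s(((Z m : ℕ) : ZMod (2 * n)), ((Z m + 1 : ℕ) : ZMod (2 * n))) =
          s(((Z m' : ℕ) : ZMod (2 * n)), ((Z m' + 1 : ℕ) : ZMod (2 * n))) := by
        rw [← hZE m, ← hZE m', hII]
      rw [Sym2.eq_iff] at hEE
      have c1 := hZcast m
      have c2 := hZcast m'
      rcases hEE with ⟨h1, -⟩ | ⟨h1, -⟩
      · have h := c1.symm.trans (h1.trans c2)
        rcases drisko_modeq h (by omega) (by omega) (by omega) with h | h | h <;> omega
      · have c2' := hcastadd _ _ 1 c2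
        have h := c1.symm.trans (h1.trans c2')
        rcases drisko_modeq h (by omega) (by omega) (by omega) with h | h | h <;> omega
    -- the colour class of each of these edges is determined by the parity of y₀
    have hIcol : ∀ m, m < n →
        ((y₀ % 2 = 0 → (c (I m) : ℕ) < n - 1) ∧
          (y₀ % 2 = 1 → n - 1 ≤ (c (I m) : ℕ) ∧ (c (I m) : ℕ) < 2 * n - 2)) := by
      intro m hm
      obtain ⟨w, hw, hEw, hcolw⟩ := hAB (I m)
      have hZm := hZlt m
      have hZw : Z m = w := by
        have h := (hZE m).symm.trans hEw
        rw [Sym2.eq_iff] at h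
        rcases h with ⟨h1, h2⟩ | ⟨h1, h2⟩
        · rcases drisko_modeq h1 (by omega) (by omega) (by omega) with h | h | h <;> omega
        · rcases drisko_modeq h1 (by omega) (by omega) (by omega) with h | h | h <;>
            rcases drisko_modeq h2 (by omega) (by omega) (by omega) with h' | h' | h' <;> omega
      have hpar : Z m % 2 = y₀ % 2 := by
        rcases drisko_modeq (hZcast m) (by omega) (by omega) (by omega) with h | h | h <;> omega
      rcases hcolw with ⟨hp, hcc⟩ | ⟨hp, hcc, hcc2⟩
      · exact ⟨fun _ => hcc, fun h0 => absurd h0 (by omega)⟩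
      · exact ⟨fun h0 => absurd h0 (by omega), fun _ => ⟨hcc, hcc2⟩⟩
    -- pigeonhole on the n - 1 available colours
    rcases Nat.mod_two_eq_zero_or_one y₀ with hp | hp
    · have hcard := Fintype.card_le_of_injective
        (fun m : Fin n => (⟨(c (I (m : ℕ)) : ℕ), (hIcol m m.isLt).1 hp⟩ : Fin (n - 1))) ?_
      · rw [Fintype.card_fin, Fintype.card_fin] at hcard
        omega
      · intro m m' hmm
        simp only [Fin.mk.injEq] at hmm
        exact Fin.val_injective
          (hIinj m m.isLt m' m'.isLt (hcinj (Fin.val_injective hmm)))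
    · have hcard := Fintype.card_le_of_injective
        (fun m : Fin n => (⟨(c (I (m : ℕ)) : ℕ) - (n - 1),
          by have := (hIcol m m.isLt).2 hp; omega⟩ : Fin (n - 1))) ?_
      · rw [Fintype.card_fin, Fintype.card_fin] at hcard
        omega
      · intro m m' hmm
        simp only [Fin.mk.injEq] at hmm
        have h1 := (hIcol m m.isLt).2 hp
        have h2 := (hIcol m' m'.isLt).2 hp
        have h3 : (c (I (m : ℕ)) : ℕ) = (c (I (m' : ℕ)) : ℕ) := by omega
        exact Fin.val_injective
          (hIinj m m.isLt m' m'.isLt (hcinj (Fin.val_injective h3)))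
end
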